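/- arXiv:math/0506431 — 2 statements merged into one kernel-verified Lean document; each statement's English description precedes it below -/
import Mathlib

section
/- Let P and Q be two probability measures on a measurable space, mutually absolutely continuous, and let E be an event with Q(E) > 0. Then log(P(E)/Q(E)) ≥ -(1/Q(E)) * (H(Q|P) + 1/e), where H(Q|P) = ∫ (dQ/dP) log(dQ/dP) dP is the relative entropy of Q with respect to P. -/
/-!
On `E`, Jensen's inequality for the convex function `t ↦ t log t` applied to `f = dQ/dP`
gives `Q(E) log (Q(E)/P(E)) ≤ ∫_E f log f dP`; off `E` one only uses `t log t ≥ -1/e`.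
Adding the two bounds, `Q(E) log (Q(E)/P(E)) ≤ H(Q|P) + 1/e`.
-/

open MeasureTheory Real

lemma Real.neg_inv_exp_one_le_mul_log {x : ℝ} (hx : 0 ≤ x) : -(exp 1)⁻¹ ≤ x * log x := by
  rcases hx.eq_or_lt with rfl | hx
  · simpa using (exp_pos 1).le
  -- `y + 1 ≤ exp y` at `y = -1 - log x`
  have h := add_one_le_exp (-1 - log x)
  rw [exp_sub, exp_log hx, exp_neg, le_div_iff₀ hx] at h
  linarith

lemma mul_log_div_measureReal_le_setIntegral_mul_log {α : Type*} [MeasurableSpace α]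
    {μ : Measure α} {f : α → ℝ} {s : Set α} (h0 : μ s ≠ 0) (hs : μ s ≠ ⊤)
    (hf : ∀ᵐ x ∂μ.restrict s, 0 ≤ f x) (hfi : IntegrableOn f s μ)
    (hfl : IntegrableOn (fun x ↦ f x * log (f x)) s μ) :
    (∫ x in s, f x ∂μ) * log ((∫ x in s, f x ∂μ) / μ.real s) ≤
      ∫ x in s, f x * log (f x) ∂μ := by
  have hm : 0 < μ.real s := ENNReal.toReal_pos h0 hs
  have jensen := convexOn_mul_log.map_set_average_le continuous_mul_log.continuousOn isClosed_Ici
    h0 hs hf hfi hfl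
  rwa [setAverage_eq, setAverage_eq, smul_eq_mul, smul_eq_mul, inv_mul_eq_div, inv_mul_eq_div,
    div_mul_eq_mul_div, div_le_div_iff_of_pos_right hm] at jensen

theorem stmt_1_general {Ω : Type*} [MeasurableSpace Ω]
    (P Q : Measure Ω) [IsProbabilityMeasure P] [IsProbabilityMeasure Q]
    (hQP : Q ≪ P)
    (E : Set Ω) (hE : MeasurableSet E) (hQE : 0 < (Q E).toReal)
    (H : ℝ)
    (hH : H = ∫ x, (Q.rnDeriv P x).toReal * Real.log (Q.rnDeriv P x).toReal ∂P)
    (hint : Integrable (fun x => (Q.rnDeriv P x).toReal * Real.log (Q.rnDeriv P x).toReal) P) :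
    Real.log ((P E).toReal / (Q E).toReal) ≥
      -(1 / (Q E).toReal) * (H + 1 / Real.exp 1) := by
  have hPE : P E ≠ 0 := fun h ↦ (ENNReal.toReal_pos_iff.mp hQE).1.ne' (hQP h)
  have hfE : ∫ x in E, (Q.rnDeriv P x).toReal ∂P = (Q E).toReal :=
    Measure.setIntegral_toReal_rnDeriv hQP E
  have on_E := mul_log_div_measureReal_le_setIntegral_mul_log hPE (measure_ne_top P E)
    (.of_forall fun _ ↦ ENNReal.toReal_nonneg) Measure.integrable_toReal_rnDeriv.integrableOn
    hint.integrableOn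
  rw [hfE, measureReal_def] at on_E
  have off_E : P.real Eᶜ • -(exp 1)⁻¹ ≤
      ∫ x in Eᶜ, (Q.rnDeriv P x).toReal * log (Q.rnDeriv P x).toReal ∂P :=
    setIntegral_ge_of_const_le hE.compl (measure_ne_top P _)
      (fun _ _ ↦ neg_inv_exp_one_le_mul_log ENNReal.toReal_nonneg) hint.integrableOn
  have key : (Q E).toReal * log ((Q E).toReal / (P E).toReal) ≤ H + (exp 1)⁻¹ := by
    rw [smul_eq_mul] at off_E
    nlinarith [integral_add_compl hE hint, measureReal_le_one (μ := P) (s := Eᶜ),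
      inv_pos.mpr (exp_pos 1)]
  rwa [ge_iff_le, ← neg_neg (log _), ← log_inv, inv_div, neg_mul, neg_le_neg_iff,
    one_div_mul_eq_div, le_div_iff₀' hQE, one_div]

theorem stmt_1 {Ω : Type*} [MeasurableSpace Ω]
    (P Q : Measure Ω) [IsProbabilityMeasure P] [IsProbabilityMeasure Q]
    (hPQ : P ≪ Q) (hQP : Q ≪ P)
    (E : Set Ω) (hE : MeasurableSet E) (hQE : 0 < (Q E).toReal)
    (H : ℝ)
    (hH : H = ∫ x, (Q.rnDeriv P x).toReal * Real.log (Q.rnDeriv P x).toReal ∂P)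
    (hint : Integrable (fun x => (Q.rnDeriv P x).toReal * Real.log (Q.rnDeriv P x).toReal) P) :
    Real.log ((P E).toReal / (Q E).toReal) ≥
      -(1 / (Q E).toReal) * (H + 1 / Real.exp 1) :=
  stmt_1_general P Q hQP E hE hQE H hH hint
end

section
/- Let K : ℕ → [0,∞) with ∑_{n≥1} K(n) ≤ 1 and Σ := ∑_{n≥1} n K(n) < ∞, Σ > 0. Define F(h) for h < h_c := log(∑_{n≥1} K(n)) as the unique b > 0 solving ∑ K(n) e^{-bn} = e^h, and F(h) = 0 for h ≥ h_c. Then F(h) = (e^{h_c}/Σ)(h_c - h) + o(h_c - h) as h ↑ h_c; in particular the right derivative of -F at h_c exists and equals e^{h_c}/Σ > 0, so the transition is of first order. -/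
/-!
Write `g b = ∑ K(n) e^{-bn}` (below, `discreteLaplace a x` with `a n = K (n + 1)`, `x n = n + 1`),
so that `log g (F h) = h` for `h < h_c = log g 0`. Since `|e^{-bn} - 1| ≤ bn`, dominated
convergence gives `g` the right derivative `-Σ` at `0`, hence `-log ∘ g` has right derivative
`Σ / e^{h_c}`. As `g` is antitone with `g b < g 0` for `b > 0`, `F h ↓ 0` as `h ↑ h_c`, and along
`b = F h` the difference quotient of `-log ∘ g` at `0` is exactly `(h_c - h) / F h`.
-/

open Filter Set Topology Real

noncomputable def discreteLaplace (a x : ℕ → ℝ) (b : ℝ) : ℝ :=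
  ∑' n, a n * exp (-b * x n)

lemma discreteLaplace_zero (a x : ℕ → ℝ) : discreteLaplace a x 0 = ∑' n, a n := by
  simp [discreteLaplace]

lemma exp_neg_mul_le_one {b y : ℝ} (hb : 0 ≤ b) (hy : 0 ≤ y) : exp (-b * y) ≤ 1 :=
  exp_le_one_iff.2 (by nlinarith)

lemma abs_exp_neg_mul_sub_one_le {b y : ℝ} (hb : 0 ≤ b) (hy : 0 ≤ y) :
    |exp (-b * y) - 1| ≤ b * y := by
  rw [abs_sub_comm, abs_of_nonneg (sub_nonneg.2 (exp_neg_mul_le_one hb hy))]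
  linarith [add_one_le_exp (-b * y)]

lemma tendsto_exp_neg_mul_sub_one_div (y : ℝ) :
    Tendsto (fun b => (exp (-b * y) - 1) / b) (𝓝[>] 0) (𝓝 (-y)) := by
  have hd : HasDerivAt (fun b => exp (-b * y)) (-y) 0 := by
    simpa using ((hasDerivAt_id (0 : ℝ)).neg.mul_const y).exp
  simpa [slope_fun_def_field] using
    (hasDerivWithinAt_iff_tendsto_slope' self_notMem_Ioi).1 hd.hasDerivWithinAt

lemma tendsto_nhdsWithin_Ioi_zero_of_antitoneOn {α : Type*} {l : Filter α} {g : ℝ → ℝ}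
    {f : α → ℝ} {L : ℝ} (hg : AntitoneOn g (Ioi 0)) (hlt : ∀ b > 0, g b < L)
    (hf : ∀ᶠ t in l, 0 < f t) (hgf : Tendsto (fun t => g (f t)) l (𝓝 L)) :
    Tendsto f l (𝓝[>] 0) := by
  refine tendsto_nhdsWithin_iff.2 ⟨tendsto_order.2
    ⟨fun c hc => hf.mono fun t ht => hc.trans ht, fun c hc => ?_⟩, hf⟩
  filter_upwards [hf, hgf.eventually (lt_mem_nhds (hlt c hc))] with t hft hgc
  by_contra! hcf
  exact (hg hc hft hcf).not_gt hgc

lemma tendsto_div_of_hasDerivWithinAt_Ioi {α : Type*} {l : Filter α} {φ : ℝ → ℝ} {D x₀ : ℝ}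
    {f u : α → ℝ} (hφ : HasDerivWithinAt φ D (Ioi x₀) x₀) (hD : D ≠ 0)
    (hf : Tendsto f l (𝓝[>] x₀)) (hu : ∀ᶠ t in l, φ (f t) - φ x₀ = u t) :
    Tendsto (fun t => (f t - x₀) / u t) l (𝓝 D⁻¹) := by
  have hslope := (hasDerivWithinAt_iff_tendsto_slope' self_notMem_Ioi).1 hφ
  refine (hslope.comp hf).inv₀ hD |>.congr' ?_
  filter_upwards [hu] with t ht
  rw [Function.comp_apply, slope_def_field, ht, inv_div]

section DiscreteLaplace

variable {a x : ℕ → ℝ} (ha : ∀ n, 0 ≤ a n) (hx : ∀ n, 0 ≤ x n) (hsum : Summable a)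
include ha hx hsum

lemma summable_mul_exp_neg_mul {b : ℝ} (hb : 0 ≤ b) :
    Summable fun n => a n * exp (-b * x n) :=
  hsum.of_nonneg_of_le (fun n => mul_nonneg (ha n) (exp_pos _).le)
    (fun n => mul_le_of_le_one_right (ha n) (exp_neg_mul_le_one hb (hx n)))

lemma antitoneOn_discreteLaplace : AntitoneOn (discreteLaplace a x) (Ici 0) :=
  fun b hb c hc hbc => Summable.tsum_le_tsum
    (fun n => mul_le_mul_of_nonneg_left (exp_le_exp.2 (by nlinarith [hx n])) (ha n))
    (summable_mul_exp_neg_mul ha hx hsum hc) (summable_mul_exp_neg_mul ha hx hsum hb)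

lemma discreteLaplace_lt_tsum {n₀ : ℕ} (han₀ : 0 < a n₀) (hxn₀ : 0 < x n₀) {b : ℝ}
    (hb : 0 < b) : discreteLaplace a x b < ∑' n, a n :=
  Summable.tsum_lt_tsum (i := n₀)
    (fun n => mul_le_of_le_one_right (ha n) (exp_neg_mul_le_one hb.le (hx n)))
    (mul_lt_of_lt_one_right han₀ (exp_lt_one_iff.2 (by nlinarith)))
    (summable_mul_exp_neg_mul ha hx hsum hb.le) hsum

theorem hasDerivWithinAt_discreteLaplace (hmean : Summable fun n => x n * a n) :
    HasDerivWithinAt (discreteLaplace a x) (-∑' n, x n * a n) (Ioi 0) 0 := by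
  rw [hasDerivWithinAt_iff_tendsto_slope' self_notMem_Ioi, ← tsum_neg]
  refine (tendsto_tsum_of_dominated_convergence (f := fun b n => a n * ((exp (-b * x n) - 1) / b))
    hmean (fun n => ?_) ?_).congr' ?_
  · simpa [mul_comm] using (tendsto_exp_neg_mul_sub_one_div (x n)).const_mul (a n)
  · filter_upwards [self_mem_nhdsWithin] with b (hb : 0 < b) n
    rw [norm_mul, norm_div, Real.norm_of_nonneg (ha n), Real.norm_of_nonneg hb.le, Real.norm_eq_abs,
      mul_comm (x n)]
    refine mul_le_mul_of_nonneg_left ((div_le_iff₀ hb).2 ?_) (ha n)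
    linarith [abs_exp_neg_mul_sub_one_le hb.le (hx n)]
  · filter_upwards [self_mem_nhdsWithin] with b (hb : 0 < b)
    rw [slope_def_field, discreteLaplace_zero, discreteLaplace,
      ← (summable_mul_exp_neg_mul ha hx hsum hb.le).tsum_sub hsum, ← tsum_div_const]
    exact tsum_congr fun n => by ring

end DiscreteLaplace

theorem stmt_8_general (K : ℕ → ℝ) (hK : ∀ n, 0 ≤ K n)
    (hsum : Summable (fun n : ℕ => K (n + 1)))
    (hmean : Summable (fun n : ℕ => ((n : ℝ) + 1) * K (n + 1)))
    (Sig : ℝ) (hSig : Sig = ∑' n : ℕ, ((n : ℝ) + 1) * K (n + 1)) (hSigpos : 0 < Sig)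
    (h_c : ℝ) (hhc : h_c = Real.log (∑' n : ℕ, K (n + 1)))
    (F : ℝ → ℝ)
    (hF : ∀ h < h_c, 0 < F h ∧
        ∑' n : ℕ, K (n + 1) * Real.exp (-(F h) * (n + 1)) = Real.exp h) :
    Tendsto (fun h => F h / (h_c - h)) (nhdsWithin h_c (Set.Iio h_c))
      (nhds (Real.exp h_c / Sig)) := by
  set a : ℕ → ℝ := fun n => K (n + 1)
  set x : ℕ → ℝ := fun n => (n : ℝ) + 1
  have ha : ∀ n, 0 ≤ a n := fun n => hK (n + 1)
  have hx : ∀ n, 0 ≤ x n := fun n => by positivity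
  obtain ⟨n₀, hn₀⟩ : ∃ n₀, 0 < a n₀ := by
    by_contra! h
    have hzero : ∀ n, x n * a n = 0 := fun n => by rw [le_antisymm (h n) (ha n), mul_zero]
    rw [tsum_congr hzero, tsum_zero] at hSig
    linarith
  have hg0 : discreteLaplace a x 0 = exp h_c := by
    rw [discreteLaplace_zero, hhc, exp_log (hsum.tsum_pos ha n₀ hn₀)]
  have hFg : ∀ h < h_c, discreteLaplace a x (F h) = exp h := fun h hh => (hF h hh).2
  have hlt : ∀ b > 0, discreteLaplace a x b < exp h_c := fun b hb => by
    rw [← hg0, discreteLaplace_zero]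
    exact discreteLaplace_lt_tsum ha hx hsum hn₀ (by positivity) hb
  have hFlim : Tendsto F (𝓝[<] h_c) (𝓝[>] 0) :=
    tendsto_nhdsWithin_Ioi_zero_of_antitoneOn
      ((antitoneOn_discreteLaplace ha hx hsum).mono Ioi_subset_Ici_self) hlt
      (eventually_nhdsWithin_of_forall fun h hh => (hF h hh).1)
      (continuous_exp.continuousWithinAt.tendsto.congr'
        (eventually_nhdsWithin_of_forall fun h hh => (hFg h hh).symm))
  have hlog : HasDerivWithinAt (fun b => -log (discreteLaplace a x b)) (Sig / exp h_c)
      (Ioi 0) 0 := by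
    have := (hasDerivWithinAt_discreteLaplace ha hx hsum hmean).log (by rw [hg0]; positivity)
    rw [hg0, ← hSig, neg_div] at this
    exact neg_neg (Sig / exp h_c) ▸ this.neg
  have := tendsto_div_of_hasDerivWithinAt_Ioi hlog (by positivity) hFlim
    (u := fun h => h_c - h) (eventually_nhdsWithin_of_forall fun h hh => by
      rw [hFg h hh, hg0, log_exp, log_exp]; ring)
  simpa only [sub_zero, inv_div] using this

theorem stmt_8 (K : ℕ → ℝ) (hK : ∀ n, 0 ≤ K n)
    (hsum : Summable (fun n : ℕ => K (n + 1)))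
    (hle : ∑' n : ℕ, K (n + 1) ≤ 1)
    (hmean : Summable (fun n : ℕ => ((n : ℝ) + 1) * K (n + 1)))
    (Sig : ℝ) (hSig : Sig = ∑' n : ℕ, ((n : ℝ) + 1) * K (n + 1)) (hSigpos : 0 < Sig)
    (h_c : ℝ) (hhc : h_c = Real.log (∑' n : ℕ, K (n + 1)))
    (F : ℝ → ℝ)
    (hF : ∀ h < h_c, 0 < F h ∧
        ∑' n : ℕ, K (n + 1) * Real.exp (-(F h) * (n + 1)) = Real.exp h)
    (hF0 : ∀ h ≥ h_c, F h = 0) :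
    Tendsto (fun h => F h / (h_c - h)) (nhdsWithin h_c (Set.Iio h_c))
      (nhds (Real.exp h_c / Sig)) :=
  stmt_8_general K hK hsum hmean Sig hSig hSigpos h_c hhc F hF
end
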